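/- Let Γ > 0, κ ∈ [0,1], ξ nonnegative continuous, at resonance, with B(t) > 0 for all t. Then γ₊(t) + γ₋(t) = −2Ḃ(t)/B(t) ≥ 0 and γ₊(t) + γ₋(t) + 4γ_z(t) = −4Ċ(t)/C(t) ≥ 0 for all t ≥ 0, i.e. the BLP conditions for no information backflow hold. -/

import Mathlib

open MeasureTheory intervalIntegral Real

/-!
Both `B` and `C` have the shape `F t = exp (a t) * (1 - c ∫₀ᵗ g)` with `a ≤ 0`, `c ≥ 0` and
`g ≥ 0`, so `F' t = a F t - c exp (a t) g t` is nonpositive wherever `F t ≥ 0`. For `B` this is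
the hypothesis `B > 0`. For `C` it follows from `B > 0`: the kernel of `C` is pointwise
dominated by that of `B`, because `exp (-(Γ/2)(s - τ)) ≤ exp ((Γ/2)(s - τ))` for `τ ≤ s`.
-/

lemma hasDerivAt_exp_mul_one_sub_integral (a c : ℝ) {g : ℝ → ℝ} (hg : Continuous g)
    (t : ℝ) :
    HasDerivAt (fun x => exp (a * x) * (1 - c * ∫ s in (0:ℝ)..x, g s))
      (a * (exp (a * t) * (1 - c * ∫ s in (0:ℝ)..t, g s)) - c * (exp (a * t) * g t)) t := by
  have hexp : HasDerivAt (fun x => exp (a * x)) (exp (a * t) * (a * 1)) t :=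
    ((hasDerivAt_id t).const_mul a).exp
  have hprim := ((hg.integral_hasStrictDerivAt 0 t).hasDerivAt.const_mul c).const_sub 1
  exact (hexp.mul hprim).congr_deriv (by ring)

lemma deriv_exp_mul_one_sub_integral_nonpos {a c : ℝ} {g : ℝ → ℝ} (hg : Continuous g)
    (ha : a ≤ 0) (hc : 0 ≤ c) {t : ℝ} (hgt : 0 ≤ g t)
    (hF : 0 ≤ exp (a * t) * (1 - c * ∫ s in (0:ℝ)..t, g s)) :
    deriv (fun x => exp (a * x) * (1 - c * ∫ s in (0:ℝ)..x, g s)) t ≤ 0 := by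
  rw [(hasDerivAt_exp_mul_one_sub_integral a c hg t).deriv]
  exact sub_nonpos.2 <| (mul_nonpos_of_nonpos_of_nonneg ha hF).trans <|
    mul_nonneg hc (mul_nonneg (exp_nonneg _) hgt)

section Kernel

variable {ξ : ℝ → ℝ}

lemma continuous_mul_exp_mul_primitive (hξ : Continuous ξ) (a b : ℝ) :
    Continuous fun s => ξ s * exp (a * s) * ∫ τ in (0:ℝ)..s, ξ τ * exp (b * τ) := by
  have hprim : Continuous fun s => ∫ τ in (0:ℝ)..s, ξ τ * exp (b * τ) :=
    continuous_primitive (fun _ _ => (hξ.mul (by fun_prop)).intervalIntegrable _ _) 0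
  fun_prop

lemma mul_exp_mul_integral_nonneg (hξ : ∀ s, 0 ≤ s → 0 ≤ ξ s) (a b : ℝ) {t : ℝ}
    (ht : 0 ≤ t) :
    0 ≤ ξ t * exp (a * t) * ∫ τ in (0:ℝ)..t, ξ τ * exp (b * τ) :=
  mul_nonneg (mul_nonneg (hξ t ht) (exp_nonneg _)) <|
    integral_nonneg ht fun τ hτ => mul_nonneg (hξ τ hτ.1) (exp_nonneg _)

lemma exp_neg_mul_integral_le (hξ : ∀ s, 0 ≤ s → 0 ≤ ξ s) (hξc : Continuous ξ) {r : ℝ}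
    (hr : 0 ≤ r) {s : ℝ} (hs : 0 ≤ s) :
    exp (-r * s) * ∫ τ in (0:ℝ)..s, ξ τ * exp (r * τ) ≤
      exp (r * s) * ∫ τ in (0:ℝ)..s, ξ τ * exp (-r * τ) := by
  rw [← intervalIntegral.integral_const_mul, ← intervalIntegral.integral_const_mul]
  refine integral_mono_on hs (Continuous.intervalIntegrable (by fun_prop) _ _)
    (Continuous.intervalIntegrable (by fun_prop) _ _) fun τ hτ => ?_
  calc exp (-r * s) * (ξ τ * exp (r * τ)) = ξ τ * exp (-(r * (s - τ))) := by
        rw [mul_left_comm, ← exp_add]; ring_nf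
    _ ≤ ξ τ * exp (r * (s - τ)) :=
        mul_le_mul_of_nonneg_left (exp_le_exp.2 (by nlinarith [hτ.2])) (hξ τ hτ.1)
    _ = exp (r * s) * (ξ τ * exp (-r * τ)) := by
        rw [mul_left_comm, ← exp_add]; ring_nf

lemma integral_exp_neg_kernel_le (hξ : ∀ s, 0 ≤ s → 0 ≤ ξ s) (hξc : Continuous ξ) {r : ℝ}
    (hr : 0 ≤ r) {t : ℝ} (ht : 0 ≤ t) :
    ∫ s in (0:ℝ)..t, ξ s * exp (-r * s) * ∫ τ in (0:ℝ)..s, ξ τ * exp (r * τ) ≤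
      ∫ s in (0:ℝ)..t, ξ s * exp (r * s) * ∫ τ in (0:ℝ)..s, ξ τ * exp (-r * τ) :=
  integral_mono_on ht ((continuous_mul_exp_mul_primitive hξc _ _).intervalIntegrable _ _)
    ((continuous_mul_exp_mul_primitive hξc _ _).intervalIntegrable _ _) fun s hs => by
      simpa only [mul_assoc] using
        mul_le_mul_of_nonneg_left (exp_neg_mul_integral_le hξ hξc hr hs.1) (hξ s hs.1)

end Kernel

theorem stmt18_general (Γ κ : ℝ) (hΓ : 0 < Γ) (hκ0 : 0 ≤ κ)
    (ξ : ℝ → ℝ) (hξ : ∀ s, 0 ≤ s → 0 ≤ ξ s) (hcont : Continuous ξ)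
    (B C : ℝ → ℝ)
    (hB : B = fun t => Real.exp (-Γ * t) *
      (1 - 4 * κ * Γ * ∫ s in (0:ℝ)..t,
        ξ s * Real.exp (Γ * s / 2) * ∫ τ in (0:ℝ)..s, ξ τ * Real.exp (-Γ * τ / 2)))
    (hC : C = fun t => Real.exp (-Γ * t / 2) *
      (1 - 2 * κ * Γ * ∫ s in (0:ℝ)..t,
        ξ s * Real.exp (-Γ * s / 2) * ∫ τ in (0:ℝ)..s, ξ τ * Real.exp (Γ * τ / 2)))
    (hBpos : ∀ t : ℝ, 0 ≤ t → 0 < B t) :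
    ∀ t : ℝ, 0 ≤ t →
      0 ≤ -2 * deriv B t / B t ∧ 0 ≤ -4 * deriv C t / C t := by
  have hhalf : ∀ x, Γ * x / 2 = Γ / 2 * x := fun x => by ring
  have hnhalf : ∀ x, -Γ * x / 2 = -(Γ / 2) * x := fun x => by ring
  simp only [hhalf, hnhalf] at hB hC
  intro t ht
  have hBt := hBpos t ht
  have hκΓ : 0 ≤ 2 * κ * Γ := by positivity
  have hCt : 0 < C t := by
    have hP := integral_nonneg (μ := volume) ht fun s hs =>
      mul_exp_mul_integral_nonneg hξ (Γ / 2) (-(Γ / 2)) hs.1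
    have hQP := integral_exp_neg_kernel_le hξ hcont (by positivity : 0 ≤ Γ / 2) ht
    have hBfac := pos_of_mul_pos_right (hB ▸ hBt) (exp_nonneg _)
    rw [hC]
    refine mul_pos (exp_pos _) ?_
    linarith [mul_le_mul_of_nonneg_left hQP hκΓ, mul_nonneg hκΓ hP]
  have hdB : deriv B t ≤ 0 := by
    subst hB
    exact deriv_exp_mul_one_sub_integral_nonpos (continuous_mul_exp_mul_primitive hcont _ _)
      (by linarith) (by positivity) (mul_exp_mul_integral_nonneg hξ _ _ ht) hBt.le
  have hdC : deriv C t ≤ 0 := by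
    subst hC
    exact deriv_exp_mul_one_sub_integral_nonpos (continuous_mul_exp_mul_primitive hcont _ _)
      (by linarith) hκΓ (mul_exp_mul_integral_nonneg hξ _ _ ht) hCt.le
  exact ⟨div_nonneg (by linarith) hBt.le, div_nonneg (by linarith) hCt.le⟩

theorem stmt18 (Γ κ : ℝ) (hΓ : 0 < Γ) (hκ0 : 0 ≤ κ) (hκ1 : κ ≤ 1)
    (ξ : ℝ → ℝ) (hξ : ∀ s, 0 ≤ s → 0 ≤ ξ s) (hcont : Continuous ξ)
    (B C : ℝ → ℝ)
    (hB : B = fun t => Real.exp (-Γ * t) *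
      (1 - 4 * κ * Γ * ∫ s in (0:ℝ)..t,
        ξ s * Real.exp (Γ * s / 2) * ∫ τ in (0:ℝ)..s, ξ τ * Real.exp (-Γ * τ / 2)))
    (hC : C = fun t => Real.exp (-Γ * t / 2) *
      (1 - 2 * κ * Γ * ∫ s in (0:ℝ)..t,
        ξ s * Real.exp (-Γ * s / 2) * ∫ τ in (0:ℝ)..s, ξ τ * Real.exp (Γ * τ / 2)))
    (hBpos : ∀ t : ℝ, 0 ≤ t → 0 < B t) :
    ∀ t : ℝ, 0 ≤ t →
      0 ≤ -2 * deriv B t / B t ∧ 0 ≤ -4 * deriv C t / C t :=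
  stmt18_general Γ κ hΓ hκ0 ξ hξ hcont B C hB hC hBpos
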